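/- arXiv:1403.3157 — 7 statements merged into one kernel-verified Lean document; each statement's English description precedes it below -/
import Mathlib

section
/- Truth lemma for the embedding of modal logic K into BFNL*: for every binary Kripke model M = (W,R,V), every w ∈ W, and every modal formula A, we have M, w ⊨ A if and only if J^M, w₁ ⊨ A†, where J^M is the ternary model obtained by duplicating each state. -/
/-- Formulas of BFNL*: atoms, ⊥, ⊤, ∧, ∨, ·, \, /, ¬. -/
inductive Fm : Type
  | atom : ℕ → Fm
  | bot  : Fm
  | top  : Fm
  | conj : Fm → Fm → Fm
  | disj : Fm → Fm → Fm
  | prod : Fm → Fm → Fm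
  | ldiv : Fm → Fm → Fm   -- A \ B
  | rdiv : Fm → Fm → Fm   -- A / B
  | neg  : Fm → Fm
  deriving DecidableEq

/-- Formula trees. -/
inductive Tr : Type
  | leaf : Fm → Tr
  | comma : Tr → Tr → Tr
  deriving DecidableEq

/-- One-hole contexts in formula trees. -/
inductive Ctx : Type
  | hole : Ctx
  | left : Ctx → Tr → Ctx
  | right : Tr → Ctx → Ctx

/-- Fill a context with a possibly empty tree (the hole is deleted if empty). -/
def Ctx.fillOpt : Ctx → Option Tr → Option Tr
  | .hole, t => t
  | .left c d, t => some (match c.fillOpt t with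
      | none => d
      | some g => .comma g d)
  | .right g c, t => some (match c.fillOpt t with
      | none => g
      | some d => .comma g d)

/-- `A ∘ Γ` with possibly empty `Γ`. -/
def Tr.pre (A : Fm) : Option Tr → Tr
  | none => .leaf A
  | some g => .comma (.leaf A) g

/-- `Γ ∘ B` with possibly empty `Γ`. -/
def Tr.post : Option Tr → Fm → Tr
  | none, B => .leaf B
  | some g, B => .comma g (.leaf B)

/-- Derivability in the sequent calculus BFNL* (empty antecedents permitted). -/
inductive Der : Option Tr → Fm → Prop
  | id (A) : Der (some (.leaf A)) A
  | distr (A B C) :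
      Der (some (.leaf (.conj A (.disj B C)))) (.disj (.conj A B) (.conj A C))
  | botL (Γ : Ctx) (A) : Der (Γ.fillOpt (some (.leaf .bot))) A
  | topR (t) : Der t .top
  | neg1 (A) : Der (some (.leaf (.conj A (.neg A)))) .bot
  | neg2 (A) : Der (some (.leaf .top)) (.disj A (.neg A))
  | ldivL (Γ : Ctx) (Δ : Tr) (A B C) :
      Der (some Δ) A → Der (Γ.fillOpt (some (.leaf B))) C →
      Der (Γ.fillOpt (some (.comma Δ (.leaf (.ldiv A B))))) C
  | ldivR (t A B) : Der (some (Tr.pre A t)) B → Der t (.ldiv A B)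
  | rdivL (Γ : Ctx) (Δ : Tr) (A B C) :
      Der (Γ.fillOpt (some (.leaf A))) C → Der (some Δ) B →
      Der (Γ.fillOpt (some (.comma (.leaf (.rdiv A B)) Δ))) C
  | rdivR (t A B) : Der (some (Tr.post t B)) A → Der t (.rdiv A B)
  | prodL (Γ : Ctx) (A B C) :
      Der (Γ.fillOpt (some (.comma (.leaf A) (.leaf B)))) C →
      Der (Γ.fillOpt (some (.leaf (.prod A B)))) C
  | prodR (Γ Δ : Tr) (A B) :
      Der (some Γ) A → Der (some Δ) B → Der (some (.comma Γ Δ)) (.prod A B)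
  | conjL1 (Γ : Ctx) (A1 A2 B) :
      Der (Γ.fillOpt (some (.leaf A1))) B →
      Der (Γ.fillOpt (some (.leaf (.conj A1 A2)))) B
  | conjL2 (Γ : Ctx) (A1 A2 B) :
      Der (Γ.fillOpt (some (.leaf A2))) B →
      Der (Γ.fillOpt (some (.leaf (.conj A1 A2)))) B
  | conjR (t A B) : Der t A → Der t B → Der t (.conj A B)
  | disjL (Γ : Ctx) (A1 A2 B) :
      Der (Γ.fillOpt (some (.leaf A1))) B →
      Der (Γ.fillOpt (some (.leaf A2))) B →
      Der (Γ.fillOpt (some (.leaf (.disj A1 A2)))) B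
  | disjR1 (t A1 A2) : Der t A1 → Der t (.disj A1 A2)
  | disjR2 (t A1 A2) : Der t A2 → Der t (.disj A1 A2)
  | cut (Γ : Ctx) (t A B) :
      Der t A → Der (Γ.fillOpt (some (.leaf A))) B → Der (Γ.fillOpt t) B

/-- A ternary relational model for BFNL*. -/
structure RMod where
  W : Type
  ne : Nonempty W
  R : W → W → W → Prop
  V : ℕ → W → Prop

/-- Satisfaction of a formula at a state of a ternary relational model. -/
def sat (M : RMod) : Fm → M.W → Prop
  | .atom n, u => M.V n u
  | .bot, _ => False
  | .top, _ => True
  | .conj A B, u => sat M A u ∧ sat M B u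
  | .disj A B, u => sat M A u ∨ sat M B u
  | .neg A, u => ¬ sat M A u
  | .prod A B, u => ∃ v w, M.R u v w ∧ sat M A v ∧ sat M B w
  | .rdiv A B, u => ∀ v w, M.R w u v → sat M B v → sat M A w
  | .ldiv A B, u => ∀ v w, M.R v w u → sat M A w → sat M B v

/-- Satisfaction of (the product formula of) a formula tree. -/
def satTr (M : RMod) : Tr → M.W → Prop
  | .leaf A, u => sat M A u
  | .comma Γ Δ, u => ∃ v w, M.R u v w ∧ satTr M Γ v ∧ satTr M Δ w

/-- Satisfaction of a possibly empty antecedent. -/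
def satOpt (M : RMod) : Option Tr → M.W → Prop
  | none, _ => True
  | some Γ, u => satTr M Γ u

/-- Modal formulas: atoms, ⊥, ∧, ∨, ⊃, ◇. -/
inductive MF : Type
  | atom : ℕ → MF
  | bot  : MF
  | conj : MF → MF → MF
  | disj : MF → MF → MF
  | impl : MF → MF → MF
  | dia  : MF → MF
  deriving DecidableEq

/-- A binary Kripke model. -/
structure KMod where
  W : Type
  ne : Nonempty W
  R : W → W → Prop
  V : ℕ → W → Prop

/-- Kripke satisfaction for modal formulas. -/
def msat (M : KMod) : MF → M.W → Prop
  | .atom n, u => M.V n u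
  | .bot, _ => False
  | .conj A B, u => msat M A u ∧ msat M B u
  | .disj A B, u => msat M A u ∨ msat M B u
  | .impl A B, u => msat M A u → msat M B u
  | .dia A, u => ∃ v, M.R u v ∧ msat M A v

/-- The translation `†` of modal formulas into BFNL* formulas; the distinguished
fresh letter `m` is `Fm.atom 0`, and modal atom `p` becomes `Fm.atom (p+1)`. -/
def dag : MF → Fm
  | .atom n => .atom (n + 1)
  | .bot => .bot
  | .conj A B => .conj (dag A) (dag B)
  | .disj A B => .disj (dag A) (dag B)
  | .impl A B => .disj (.neg (dag A)) (dag B)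
  | .dia A => .prod (.atom 0) (dag A)

/-- The ternary model `J^M` obtained from a binary Kripke model `M` by duplicating
each state: `w₁ = (w, false)`, `w₂ = (w, true)`. -/
def JM (M : KMod) : RMod where
  W := M.W × Bool
  ne := ⟨(M.ne.some, false)⟩
  R a b c := ∃ w u, M.R w u ∧ a = (w, false) ∧ b = (w, true) ∧ c = (u, false)
  V n x := match n with
    | 0 => True
    | n + 1 => M.V n x.1

/-- The only triples of `J^M` from `w₁` are `⟨w₁, w₂, u₁⟩` with `R w u`, and `m` is true
everywhere. -/
theorem sat_JM_prod_atom_zero_iff (M : KMod) (B : Fm) (w : M.W) :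
    sat (JM M) (.prod (.atom 0) B) (w, false) ↔ ∃ u, M.R w u ∧ sat (JM M) B (u, false) := by
  constructor
  · rintro ⟨-, -, ⟨_, u, hR, hw, rfl, rfl⟩, -, hB⟩
    cases hw
    exact ⟨u, hR, hB⟩
  · rintro ⟨u, hR, hB⟩
    exact ⟨(w, true), (u, false), ⟨w, u, hR, rfl, rfl, rfl⟩, trivial, hB⟩

/-- Truth lemma for the embedding of K into BFNL*: `M, w ⊨ A` iff `J^M, w₁ ⊨ A†`. -/
theorem stmt6 (M : KMod) (w : M.W) (A : MF) :
    msat M A w ↔ sat (JM M) (dag A) (w, false) := by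
  induction A generalizing w with
  | atom n => rfl
  | bot => rfl
  | conj A B ihA ihB => exact and_congr (ihA w) (ihB w)
  | disj A B ihA ihB => exact or_congr (ihA w) (ihB w)
  | impl A B ihA ihB => exact (ihA w).imp (ihB w) |>.trans imp_iff_not_or
  | dia A ih =>
    rw [dag, sat_JM_prod_atom_zero_iff]
    exact exists_congr fun u => and_congr_right' (ih u)
end

section
/- The translated K axiom is a theorem of BFNL*: the sequent ⇒ (m·(A∧¬B)) ∨ (m·¬A) ∨ ¬(m·¬B) is derivable in BFNL* for all formulas A, B. -/
/-! Case split on excluded middle for `m·¬B`. If `¬(m·¬B)` holds, it is the third disjunct.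
Otherwise excluded middle for `A` and distribution turn `¬B` into `(A∧¬B) ∨ ¬A`, and `m·_`
distributes over that disjunction, giving the first or the second disjunct. -/

namespace Der

variable {t : Option Tr} {A A' B B' C : Fm}

theorem trans (h₁ : Der t A) (h₂ : Der (some (.leaf A)) B) : Der t B :=
  cut .hole t A B h₁ h₂

theorem excludedMiddle (t : Option Tr) (A : Fm) : Der t (.disj A (.neg A)) :=
  (topR t).trans (neg2 A)

theorem byCases (D : Fm) (hpos : Der (some (.leaf D)) C) (hneg : Der (some (.leaf (.neg D))) C) :
    Der t C :=
  (excludedMiddle t D).trans (disjL .hole D (.neg D) C hpos hneg)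

theorem disj_mono (hA : Der (some (.leaf A)) A') (hB : Der (some (.leaf B)) B') :
    Der (some (.leaf (.disj A B))) (.disj A' B') :=
  disjL .hole A B _ (disjR1 _ _ _ hA) (disjR2 _ _ _ hB)

theorem conj_comm (A B : Fm) : Der (some (.leaf (.conj A B))) (.conj B A) :=
  conjR _ _ _ (conjL2 .hole A B B (id B)) (conjL1 .hole A B A (id A))

theorem conj_or_neg (A B : Fm) : Der (some (.leaf B)) (.disj (.conj A B) (.neg A)) :=
  (conjR _ _ _ (id B) (excludedMiddle _ A)).trans <|
    (distr B A (.neg A)).trans <|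
      disj_mono (conj_comm B A) (conjL2 .hole B (.neg A) _ (id _))

theorem prod_mono_right (m : Fm) (h : Der (some (.leaf A)) A') :
    Der (some (.leaf (.prod m A))) (.prod m A') :=
  prodL .hole m A _ (prodR (.leaf m) (.leaf A) m A' (id m) h)

theorem prod_disj_distrib (m A B : Fm) :
    Der (some (.leaf (.prod m (.disj A B)))) (.disj (.prod m A) (.prod m B)) :=
  prodL .hole m _ _ <| disjL (.right (.leaf m) .hole) A B _
    (disjR1 _ _ _ (prodR _ _ m A (id m) (id A)))
    (disjR2 _ _ _ (prodR _ _ m B (id m) (id B)))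

end Der

/-- The translated K axiom `⇒ (m·(A∧¬B)) ∨ (m·¬A) ∨ ¬(m·¬B)` is derivable in BFNL*,
for any propositional letter `m` and formulas `A`, `B`. -/
theorem stmt8 (n : ℕ) (A B : Fm) :
    Der none
      (.disj (.prod (.atom n) (.conj A (.neg B)))
        (.disj (.prod (.atom n) (.neg A)) (.neg (.prod (.atom n) (.neg B))))) := by
  have hpos : Der (some (.leaf (.prod (.atom n) (.neg B))))
      (.disj (.prod (.atom n) (.conj A (.neg B))) (.prod (.atom n) (.neg A))) :=
    (Der.prod_mono_right _ (Der.conj_or_neg A (.neg B))).trans (Der.prod_disj_distrib _ _ _)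
  exact Der.byCases (.prod (.atom n) (.neg B))
    (hpos.trans (Der.disj_mono (.id _) (.disjR1 _ _ _ (.id _))))
    (.disjR2 _ _ _ (.disjR2 _ _ _ (.id _)))
end

section
/- Modus ponens is admissible under the † translation in BFNL*: if ⇒ A and ⇒ ¬A ∨ B are both derivable in BFNL*, then ⇒ B is derivable in BFNL*. -/
namespace Der

theorem cut_hole {t : Option Tr} {A B : Fm} (hA : Der t A) (hB : Der (some (.leaf A)) B) :
    Der t B :=
  cut .hole t A B hA hB

theorem conj_neg_self (A B : Fm) : Der (some (.leaf (.conj A (.neg A)))) B :=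
  cut_hole (neg1 A) (botL .hole B)

theorem disjunctive_syllogism (A B : Fm) : Der (some (.leaf (.conj A (.disj (.neg A) B)))) B :=
  cut_hole (distr A (.neg A) B) <|
    disjL .hole _ _ B (conj_neg_self A B) (conjL2 .hole A B B (id B))

theorem modus_ponens {t : Option Tr} {A B : Fm} (hA : Der t A) (hAB : Der t (.disj (.neg A) B)) :
    Der t B :=
  cut_hole (conjR t _ _ hA hAB) (disjunctive_syllogism A B)

end Der

/-- Modus ponens is admissible in BFNL*: from `⇒ A` and `⇒ ¬A ∨ B` infer `⇒ B`. -/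
theorem stmt9 (A B : Fm) (h1 : Der none A) (h2 : Der none (.disj (.neg A) B)) :
    Der none B :=
  Der.modus_ponens h1 h2
end

section
/- Pseudo-complement lemma in BDFNL*: let T be a set of formulas containing ⊤ and ⊥ closed under subformulas, c(T) its closure under ∧ and ∨, and define A∼ by ⊤∼ = ⊥, ⊥∼ = ⊤, A∼ = p_A for A ∈ T with A ≠ ⊤,⊥, (A∧B)∼ = A∼∨B∼, (A∨B)∼ = A∼∧B∼. Let Ψ[T] = {A∧p_A ⇒ ⊥ : A ∈ T} ∪ {A∨p_A ⇒ ⊤ : A ∈ T}. Then for every A ∈ c(T), both A∧A∼ ⇒ ⊥ and A∨A∼ ⇒ ⊤ are derivable from Ψ[T] in BDFNL* using only c(T)-sequents. -/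
/-- The formulas at the leaves of a formula tree. -/
def Tr.leaves : Tr → Set Fm
  | .leaf A => {A}
  | .comma a b => a.leaves ∪ b.leaves

/-- A sequent is an `S`-sequent if all formulas occurring in it belong to `S`. -/
def SeqIn (S : Set Fm) : Option Tr → Fm → Prop
  | none, A => A ∈ S
  | some Γ, A => Γ.leaves ⊆ S ∧ A ∈ S

/-- Atoms occurring in a formula. -/
def Fm.atoms : Fm → Set ℕ
  | .atom n => {n}
  | .bot => ∅
  | .top => ∅
  | .conj A B => A.atoms ∪ B.atoms
  | .disj A B => A.atoms ∪ B.atoms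
  | .prod A B => A.atoms ∪ B.atoms
  | .ldiv A B => A.atoms ∪ B.atoms
  | .rdiv A B => A.atoms ∪ B.atoms
  | .neg A => A.atoms

/-- Negation-free formulas (the language of BDFNL*). -/
def Fm.NegFree : Fm → Prop
  | .atom _ => True
  | .bot => True
  | .top => True
  | .conj A B => A.NegFree ∧ B.NegFree
  | .disj A B => A.NegFree ∧ B.NegFree
  | .prod A B => A.NegFree ∧ B.NegFree
  | .ldiv A B => A.NegFree ∧ B.NegFree
  | .rdiv A B => A.NegFree ∧ B.NegFree
  | .neg _ => False

/-- Immediate subformulas. -/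
def Fm.imm : Fm → List Fm
  | .atom _ => []
  | .bot => []
  | .top => []
  | .conj A B => [A, B]
  | .disj A B => [A, B]
  | .prod A B => [A, B]
  | .ldiv A B => [A, B]
  | .rdiv A B => [A, B]
  | .neg A => [A]

/-- `T` is closed under subformulas. -/
def SubClosed (T : Set Fm) : Prop := ∀ A ∈ T, ∀ B ∈ A.imm, B ∈ T

/-- `cl T`: the closure of `T` under ∧ and ∨. -/
inductive cl (T : Set Fm) : Set Fm
  | base {A} : A ∈ T → cl T A
  | conj {A B} : cl T A → cl T B → cl T (.conj A B)
  | disj {A B} : cl T A → cl T B → cl T (.disj A B)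

/-- Derivability in BDFNL* (bounded distributive full nonassociative Lambek
calculus, no negation) from a set `Φ` of simple-sequent assumptions, using only
`S`-sequents throughout the derivation. -/
inductive DerB (Φ : Set (Fm × Fm)) (S : Set Fm) : Option Tr → Fm → Prop
  | hyp {A B} : (A, B) ∈ Φ → SeqIn S (some (.leaf A)) B →
      DerB Φ S (some (.leaf A)) B
  | id (A) : SeqIn S (some (.leaf A)) A → DerB Φ S (some (.leaf A)) A
  | distr (A B C) :
      SeqIn S (some (.leaf (.conj A (.disj B C)))) (.disj (.conj A B) (.conj A C)) →
      DerB Φ S (some (.leaf (.conj A (.disj B C)))) (.disj (.conj A B) (.conj A C))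
  | botL (Γ : Ctx) (A) : SeqIn S (Γ.fillOpt (some (.leaf .bot))) A →
      DerB Φ S (Γ.fillOpt (some (.leaf .bot))) A
  | topR (t) : SeqIn S t .top → DerB Φ S t .top
  | ldivL (Γ : Ctx) (Δ : Tr) (A B C) :
      DerB Φ S (some Δ) A → DerB Φ S (Γ.fillOpt (some (.leaf B))) C →
      SeqIn S (Γ.fillOpt (some (.comma Δ (.leaf (.ldiv A B))))) C →
      DerB Φ S (Γ.fillOpt (some (.comma Δ (.leaf (.ldiv A B))))) C
  | ldivR (t A B) : DerB Φ S (some (Tr.pre A t)) B → SeqIn S t (.ldiv A B) →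
      DerB Φ S t (.ldiv A B)
  | rdivL (Γ : Ctx) (Δ : Tr) (A B C) :
      DerB Φ S (Γ.fillOpt (some (.leaf A))) C → DerB Φ S (some Δ) B →
      SeqIn S (Γ.fillOpt (some (.comma (.leaf (.rdiv A B)) Δ))) C →
      DerB Φ S (Γ.fillOpt (some (.comma (.leaf (.rdiv A B)) Δ))) C
  | rdivR (t A B) : DerB Φ S (some (Tr.post t B)) A → SeqIn S t (.rdiv A B) →
      DerB Φ S t (.rdiv A B)
  | prodL (Γ : Ctx) (A B C) :
      DerB Φ S (Γ.fillOpt (some (.comma (.leaf A) (.leaf B)))) C →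
      SeqIn S (Γ.fillOpt (some (.leaf (.prod A B)))) C →
      DerB Φ S (Γ.fillOpt (some (.leaf (.prod A B)))) C
  | prodR (Γ Δ : Tr) (A B) :
      DerB Φ S (some Γ) A → DerB Φ S (some Δ) B →
      SeqIn S (some (.comma Γ Δ)) (.prod A B) →
      DerB Φ S (some (.comma Γ Δ)) (.prod A B)
  | conjL1 (Γ : Ctx) (A1 A2 B) :
      DerB Φ S (Γ.fillOpt (some (.leaf A1))) B →
      SeqIn S (Γ.fillOpt (some (.leaf (.conj A1 A2)))) B →
      DerB Φ S (Γ.fillOpt (some (.leaf (.conj A1 A2)))) B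
  | conjL2 (Γ : Ctx) (A1 A2 B) :
      DerB Φ S (Γ.fillOpt (some (.leaf A2))) B →
      SeqIn S (Γ.fillOpt (some (.leaf (.conj A1 A2)))) B →
      DerB Φ S (Γ.fillOpt (some (.leaf (.conj A1 A2)))) B
  | conjR (t A B) : DerB Φ S t A → DerB Φ S t B → SeqIn S t (.conj A B) →
      DerB Φ S t (.conj A B)
  | disjL (Γ : Ctx) (A1 A2 B) :
      DerB Φ S (Γ.fillOpt (some (.leaf A1))) B →
      DerB Φ S (Γ.fillOpt (some (.leaf A2))) B →
      SeqIn S (Γ.fillOpt (some (.leaf (.disj A1 A2)))) B →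
      DerB Φ S (Γ.fillOpt (some (.leaf (.disj A1 A2)))) B
  | disjR1 (t A1 A2) : DerB Φ S t A1 → SeqIn S t (.disj A1 A2) →
      DerB Φ S t (.disj A1 A2)
  | disjR2 (t A1 A2) : DerB Φ S t A2 → SeqIn S t (.disj A1 A2) →
      DerB Φ S t (.disj A1 A2)
  | cut (Γ : Ctx) (t A B) :
      DerB Φ S t A → DerB Φ S (Γ.fillOpt (some (.leaf A))) B →
      SeqIn S (Γ.fillOpt t) B →
      DerB Φ S (Γ.fillOpt t) B

/-- The dual map `(·)∼` relative to `T` and the fresh-letter assignment `p`: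
`⊤∼ = ⊥`, `⊥∼ = ⊤`, `A∼ = p_A` for `A ∈ T`, `A ≠ ⊤, ⊥`, and it swaps ∧ with ∨. -/
inductive Sim (T : Set Fm) (p : Fm → ℕ) : Fm → Fm → Prop
  | top : Sim T p .top .bot
  | bot : Sim T p .bot .top
  | base {A} : A ∈ T → A ≠ .top → A ≠ .bot → Sim T p A (.atom (p A))
  | conj {A A' B B'} : Sim T p A A' → Sim T p B B' →
      Sim T p (.conj A B) (.disj A' B')
  | disj {A A' B B'} : Sim T p A A' → Sim T p B B' →
      Sim T p (.disj A B) (.conj A' B')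

/-- `Ψ[T] = {A ∧ p_A ⇒ ⊥ : A ∈ T} ∪ {A ∨ p_A ⇒ ⊤ : A ∈ T}`. -/
def Psi (T : Set Fm) (p : Fm → ℕ) : Set (Fm × Fm) :=
  {x | ∃ A ∈ T, x = (.conj A (.atom (p A)), .bot) ∨ x = (.disj A (.atom (p A)), .top)}

/-- `T∼ = T ∪ {p_B : B ∈ T}`. -/
def Tsim (T : Set Fm) (p : Fm → ℕ) : Set Fm := T ∪ {F | ∃ B ∈ T, F = .atom (p B)}

/-!
The half `A ∨ A∼ ⇒ ⊤` is an instance of (⊤). The half `A ∧ A∼ ⇒ ⊥` goes by induction on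
the definition of `A∼`: for `A ∈ T` it is an axiom of `Ψ[T]` (or a projection when `A` is `⊤`
or `⊥`); for `A = B ∧ C` the distribution axiom splits `(B ∧ C) ∧ (B∼ ∨ C∼)` into
`((B ∧ C) ∧ B∼) ∨ ((B ∧ C) ∧ C∼)`, and each disjunct entails `B ∧ B∼`, resp. `C ∧ C∼`,
by monotonicity of `∧`; the case `A = B ∨ C` is symmetric. All formulas involved are
∧,∨-combinations of formulas of `T∼`, so the derivation stays inside `c(T∼)`.
-/

lemma seqIn_leaf {S : Set Fm} {A B : Fm} (hA : A ∈ S) (hB : B ∈ S) :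
    SeqIn S (some (.leaf A)) B :=
  ⟨by simpa [Tr.leaves] using hA, hB⟩

namespace DerB

variable {Φ : Set (Fm × Fm)}

lemma seqIn {S : Set Fm} {t : Option Tr} {A : Fm} (h : DerB Φ S t A) : SeqIn S t A := by
  cases h <;> assumption

lemma leaf_mem {S : Set Fm} {A B : Fm} (h : DerB Φ S (some (.leaf A)) B) : A ∈ S ∧ B ∈ S := by
  simpa [SeqIn, Tr.leaves] using h.seqIn

lemma trans {S : Set Fm} {X Y Z : Fm} (h₁ : DerB Φ S (some (.leaf X)) Y)
    (h₂ : DerB Φ S (some (.leaf Y)) Z) : DerB Φ S (some (.leaf X)) Z :=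
  cut .hole _ Y Z h₁ h₂ (seqIn_leaf h₁.leaf_mem.1 h₂.leaf_mem.2)

lemma refl {S : Set Fm} {X : Fm} (hX : X ∈ S) : DerB Φ S (some (.leaf X)) X :=
  id X (seqIn_leaf hX hX)

variable {U : Set Fm} {W X Y Z : Fm}

lemma conj_fst (hX : X ∈ cl U) (hY : Y ∈ cl U) :
    DerB Φ (cl U) (some (.leaf (.conj X Y))) X :=
  conjL1 .hole X Y X (refl hX) (seqIn_leaf (cl.conj hX hY) hX)

lemma conj_snd (hX : X ∈ cl U) (hY : Y ∈ cl U) :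
    DerB Φ (cl U) (some (.leaf (.conj X Y))) Y :=
  conjL2 .hole X Y Y (refl hY) (seqIn_leaf (cl.conj hX hY) hY)

lemma conj_mono {X' Y' : Fm} (hX : DerB Φ (cl U) (some (.leaf X')) X)
    (hY : DerB Φ (cl U) (some (.leaf Y')) Y) :
    DerB Φ (cl U) (some (.leaf (.conj X' Y'))) (.conj X Y) := by
  obtain ⟨memX', memX⟩ := hX.leaf_mem
  obtain ⟨memY', memY⟩ := hY.leaf_mem
  have memX'Y' : Fm.conj X' Y' ∈ cl U := cl.conj memX' memY'
  exact conjR _ X Y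
    (conjL1 .hole X' Y' X hX (seqIn_leaf memX'Y' memX))
    (conjL2 .hole X' Y' Y hY (seqIn_leaf memX'Y' memY))
    (seqIn_leaf memX'Y' (cl.conj memX memY))

lemma conj_comm (hX : X ∈ cl U) (hY : Y ∈ cl U) :
    DerB Φ (cl U) (some (.leaf (.conj X Y))) (.conj Y X) :=
  conjR _ Y X (conj_snd hX hY) (conj_fst hX hY) (seqIn_leaf (cl.conj hX hY) (cl.conj hY hX))

lemma conj_disj_elim (hX : X ∈ cl U) (hY : Y ∈ cl U) (hZ : Z ∈ cl U)
    (h₁ : DerB Φ (cl U) (some (.leaf (.conj X Y))) W)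
    (h₂ : DerB Φ (cl U) (some (.leaf (.conj X Z))) W) :
    DerB Φ (cl U) (some (.leaf (.conj X (.disj Y Z)))) W := by
  have hXYZ : Fm.disj (.conj X Y) (.conj X Z) ∈ cl U := cl.disj (cl.conj hX hY) (cl.conj hX hZ)
  refine trans (distr X Y Z (seqIn_leaf (cl.conj hX (cl.disj hY hZ)) hXYZ)) ?_
  exact disjL .hole _ _ W h₁ h₂ (seqIn_leaf hXYZ h₁.leaf_mem.2)

lemma disj_conj_elim (hX : X ∈ cl U) (hY : Y ∈ cl U) (hZ : Z ∈ cl U)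
    (h₁ : DerB Φ (cl U) (some (.leaf (.conj Y X))) W)
    (h₂ : DerB Φ (cl U) (some (.leaf (.conj Z X))) W) :
    DerB Φ (cl U) (some (.leaf (.conj (.disj Y Z) X))) W :=
  trans (conj_comm (cl.disj hY hZ) hX)
    (conj_disj_elim hX hY hZ (trans (conj_comm hX hY) h₁) (trans (conj_comm hX hZ) h₂))

end DerB

namespace Sim

variable {T : Set Fm} {p : Fm → ℕ}

lemma mem_cl (hTop : Fm.top ∈ T) (hBot : Fm.bot ∈ T) {A A' : Fm} (h : Sim T p A A') :
    A ∈ cl (Tsim T p) ∧ A' ∈ cl (Tsim T p) := by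
  induction h with
  | top => exact ⟨cl.base (Or.inl hTop), cl.base (Or.inl hBot)⟩
  | bot => exact ⟨cl.base (Or.inl hBot), cl.base (Or.inl hTop)⟩
  | base hA _ _ => exact ⟨cl.base (Or.inl hA), cl.base (Or.inr ⟨_, hA, rfl⟩)⟩
  | conj _ _ ihB ihC => exact ⟨cl.conj ihB.1 ihC.1, cl.disj ihB.2 ihC.2⟩
  | disj _ _ ihB ihC => exact ⟨cl.disj ihB.1 ihC.1, cl.conj ihB.2 ihC.2⟩

lemma derB_conj_bot (hTop : Fm.top ∈ T) (hBot : Fm.bot ∈ T) {A A' : Fm} (h : Sim T p A A') :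
    DerB (Psi T p) (cl (Tsim T p)) (some (.leaf (.conj A A'))) .bot := by
  induction h with
  | top => exact DerB.conj_snd (cl.base (Or.inl hTop)) (cl.base (Or.inl hBot))
  | bot => exact DerB.conj_fst (cl.base (Or.inl hBot)) (cl.base (Or.inl hTop))
  | @base A hA _ _ =>
    exact DerB.hyp ⟨A, hA, Or.inl rfl⟩
      (seqIn_leaf (cl.conj (cl.base (Or.inl hA)) (cl.base (Or.inr ⟨A, hA, rfl⟩)))
        (cl.base (Or.inl hBot)))
  | conj hsB hsC ihB ihC =>
    obtain ⟨⟨hB, hB'⟩, ⟨hC, hC'⟩⟩ := And.intro (hsB.mem_cl hTop hBot) (hsC.mem_cl hTop hBot)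
    exact DerB.conj_disj_elim (cl.conj hB hC) hB' hC'
      (DerB.trans (DerB.conj_mono (DerB.conj_fst hB hC) (DerB.refl hB')) ihB)
      (DerB.trans (DerB.conj_mono (DerB.conj_snd hB hC) (DerB.refl hC')) ihC)
  | disj hsB hsC ihB ihC =>
    obtain ⟨⟨hB, hB'⟩, ⟨hC, hC'⟩⟩ := And.intro (hsB.mem_cl hTop hBot) (hsC.mem_cl hTop hBot)
    exact DerB.disj_conj_elim (cl.conj hB' hC') hB hC
      (DerB.trans (DerB.conj_mono (DerB.refl hB) (DerB.conj_fst hB' hC')) ihB)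
      (DerB.trans (DerB.conj_mono (DerB.refl hC) (DerB.conj_snd hB' hC')) ihC)

end Sim

theorem stmt12_general (T : Set Fm) (p : Fm → ℕ)
    (hT : .top ∈ T) (hB : .bot ∈ T) :
    ∀ A A', A ∈ cl T → Sim T p A A' →
      DerB (Psi T p) (cl (Tsim T p)) (some (.leaf (.conj A A'))) .bot ∧
      DerB (Psi T p) (cl (Tsim T p)) (some (.leaf (.disj A A'))) .top := by
  intro A A' _ hsim
  obtain ⟨hA, hA'⟩ := hsim.mem_cl hT hB
  exact ⟨hsim.derB_conj_bot hT hB,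
    DerB.topR _ (seqIn_leaf (cl.disj hA hA') (cl.base (Or.inl hT)))⟩

/-- Pseudo-complement lemma in BDFNL*: for every `A ∈ c(T)`,
`A ∧ A∼ ⇒ ⊥` and `A ∨ A∼ ⇒ ⊤` are derivable from `Ψ[T]` using only
sequents over the ∧,∨-closure of `T∼`. -/
theorem stmt12 (T : Set Fm) (p : Fm → ℕ)
    (hT : .top ∈ T) (hB : .bot ∈ T) (hsub : SubClosed T)
    (hnf : ∀ A ∈ T, A.NegFree)
    (hinj : Function.Injective p)
    (hfresh : ∀ A ∈ T, ∀ B : Fm, p B ∉ A.atoms) :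
    ∀ A A', A ∈ cl T → Sim T p A A' →
      DerB (Psi T p) (cl (Tsim T p)) (some (.leaf (.conj A A'))) .bot ∧
      DerB (Psi T p) (cl (Tsim T p)) (some (.leaf (.disj A A'))) .top :=
  stmt12_general T p hT hB
end

section
/- Simulation of ⊥ and ⊤ via assumptions in DFNL*: let T be a set of formulas (in the language without ⊥, ⊤, ¬) containing distinguished letters p_⊥ and p_⊤ and closed under subformulas, and let Θ[T] contain the sequents p_⊥ ⇒ A, A∘p_⊥ ⇒ p_⊥, p_⊥∘A ⇒ p_⊥, A ⇒ p_⊤, A∘p_⊤ ⇒ p_⊤, p_⊤∘A ⇒ p_⊤ for all A ∈ T. Then for every A in the closure c(T) of T under ∧ and ∨, all six of these sequents (with that A) are derivable from Θ[T] in DFNL*. -/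
/-- Formulas of DFNL*: no constants `⊥`, `⊤` and no negation. -/
def Fm.Pure : Fm → Prop
  | .atom _ => True
  | .bot => False
  | .top => False
  | .conj A B => A.Pure ∧ B.Pure
  | .disj A B => A.Pure ∧ B.Pure
  | .prod A B => A.Pure ∧ B.Pure
  | .ldiv A B => A.Pure ∧ B.Pure
  | .rdiv A B => A.Pure ∧ B.Pure
  | .neg _ => False

/-- Derivability in DFNL* (distributive full nonassociative Lambek calculus:
no constants, no negation) from a set `Φ` of assumption sequents. -/
inductive DerD (Φ : Set (Tr × Fm)) : Option Tr → Fm → Prop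
  | hyp {Γ B} : (Γ, B) ∈ Φ → DerD Φ (some Γ) B
  | id (A) : DerD Φ (some (.leaf A)) A
  | distr (A B C) :
      DerD Φ (some (.leaf (.conj A (.disj B C)))) (.disj (.conj A B) (.conj A C))
  | ldivL (Γ : Ctx) (Δ : Tr) (A B C) :
      DerD Φ (some Δ) A → DerD Φ (Γ.fillOpt (some (.leaf B))) C →
      DerD Φ (Γ.fillOpt (some (.comma Δ (.leaf (.ldiv A B))))) C
  | ldivR (t A B) : DerD Φ (some (Tr.pre A t)) B → DerD Φ t (.ldiv A B)
  | rdivL (Γ : Ctx) (Δ : Tr) (A B C) :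
      DerD Φ (Γ.fillOpt (some (.leaf A))) C → DerD Φ (some Δ) B →
      DerD Φ (Γ.fillOpt (some (.comma (.leaf (.rdiv A B)) Δ))) C
  | rdivR (t A B) : DerD Φ (some (Tr.post t B)) A → DerD Φ t (.rdiv A B)
  | prodL (Γ : Ctx) (A B C) :
      DerD Φ (Γ.fillOpt (some (.comma (.leaf A) (.leaf B)))) C →
      DerD Φ (Γ.fillOpt (some (.leaf (.prod A B)))) C
  | prodR (Γ Δ : Tr) (A B) :
      DerD Φ (some Γ) A → DerD Φ (some Δ) B →
      DerD Φ (some (.comma Γ Δ)) (.prod A B)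
  | conjL1 (Γ : Ctx) (A1 A2 B) :
      DerD Φ (Γ.fillOpt (some (.leaf A1))) B →
      DerD Φ (Γ.fillOpt (some (.leaf (.conj A1 A2)))) B
  | conjL2 (Γ : Ctx) (A1 A2 B) :
      DerD Φ (Γ.fillOpt (some (.leaf A2))) B →
      DerD Φ (Γ.fillOpt (some (.leaf (.conj A1 A2)))) B
  | conjR (t A B) : DerD Φ t A → DerD Φ t B → DerD Φ t (.conj A B)
  | disjL (Γ : Ctx) (A1 A2 B) :
      DerD Φ (Γ.fillOpt (some (.leaf A1))) B →
      DerD Φ (Γ.fillOpt (some (.leaf A2))) B →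
      DerD Φ (Γ.fillOpt (some (.leaf (.disj A1 A2)))) B
  | disjR1 (t A1 A2) : DerD Φ t A1 → DerD Φ t (.disj A1 A2)
  | disjR2 (t A1 A2) : DerD Φ t A2 → DerD Φ t (.disj A1 A2)
  | cut (Γ : Ctx) (t A B) :
      DerD Φ t A → DerD Φ (Γ.fillOpt (some (.leaf A))) B → DerD Φ (Γ.fillOpt t) B

/-- `Θ[T]`: the six sequent forms
`p_⊥ ⇒ A`, `A∘p_⊥ ⇒ p_⊥`, `p_⊥∘A ⇒ p_⊥`, `A ⇒ p_⊤`, `A∘p_⊤ ⇒ p_⊤`, `p_⊤∘A ⇒ p_⊤`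
for all `A ∈ T`, where `p_⊥ = atom pb` and `p_⊤ = atom pt`. -/
def Theta (T : Set Fm) (pb pt : ℕ) : Set (Tr × Fm) :=
  {x | ∃ A ∈ T,
    x = (.leaf (.atom pb), A) ∨
    x = (.comma (.leaf A) (.leaf (.atom pb)), .atom pb) ∨
    x = (.comma (.leaf (.atom pb)) (.leaf A), .atom pb) ∨
    x = (.leaf A, .atom pt) ∨
    x = (.comma (.leaf A) (.leaf (.atom pt)), .atom pt) ∨
    x = (.comma (.leaf (.atom pt)) (.leaf A), .atom pt)}

/-! In each sequent of `Θ[T]` the formula `A` is either the succedent or a leaf of the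
antecedent. The first kind passes from `T` to `cl T` by `∧R` and `∨R₁`, the second by `∧L₁`
and `∨L`. -/

namespace DerD

variable {Φ : Set (Tr × Fm)} {T : Set Fm}

theorem of_mem_cl_succedent {t : Option Tr} (h : ∀ A ∈ T, DerD Φ t A) :
    ∀ A ∈ cl T, DerD Φ t A := by
  intro A hA
  induction hA with
  | base hA => exact h _ hA
  | conj _ _ ih₁ ih₂ => exact conjR _ _ _ ih₁ ih₂
  | disj _ _ ih₁ _ => exact disjR1 _ _ _ ih₁

theorem of_mem_cl_antecedent {Γ : Ctx} {C : Fm}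
    (h : ∀ A ∈ T, DerD Φ (Γ.fillOpt (some (.leaf A))) C) :
    ∀ A ∈ cl T, DerD Φ (Γ.fillOpt (some (.leaf A))) C := by
  intro A hA
  induction hA with
  | base hA => exact h _ hA
  | conj _ _ ih₁ _ => exact conjL1 _ _ _ _ ih₁
  | disj _ _ ih₁ ih₂ => exact disjL _ _ _ _ ih₁ ih₂

end DerD

theorem stmt14_general (T : Set Fm) (pb pt : ℕ) :
    ∀ A ∈ cl T,
      DerD (Theta T pb pt) (some (.leaf (.atom pb))) A ∧
      DerD (Theta T pb pt) (some (.comma (.leaf A) (.leaf (.atom pb)))) (.atom pb) ∧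
      DerD (Theta T pb pt) (some (.comma (.leaf (.atom pb)) (.leaf A))) (.atom pb) ∧
      DerD (Theta T pb pt) (some (.leaf A)) (.atom pt) ∧
      DerD (Theta T pb pt) (some (.comma (.leaf A) (.leaf (.atom pt)))) (.atom pt) ∧
      DerD (Theta T pb pt) (some (.comma (.leaf (.atom pt)) (.leaf A))) (.atom pt) := by
  intro A hA
  refine ⟨DerD.of_mem_cl_succedent ?_ A hA,
    DerD.of_mem_cl_antecedent (Γ := .left .hole (.leaf (.atom pb))) ?_ A hA,
    DerD.of_mem_cl_antecedent (Γ := .right (.leaf (.atom pb)) .hole) ?_ A hA,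
    DerD.of_mem_cl_antecedent (Γ := .hole) ?_ A hA,
    DerD.of_mem_cl_antecedent (Γ := .left .hole (.leaf (.atom pt))) ?_ A hA,
    DerD.of_mem_cl_antecedent (Γ := .right (.leaf (.atom pt)) .hole) ?_ A hA⟩
  all_goals exact fun B hB => .hyp ⟨B, hB, by simp [Ctx.fillOpt]⟩

/-- Simulation of `⊥` and `⊤` via assumptions in DFNL*: for every `A` in the
∧,∨-closure of `T`, all six sequent forms of `Θ[T]` with that `A` are derivable
from `Θ[T]` in DFNL*. -/
theorem stmt14 (T : Set Fm) (pb pt : ℕ) (hne : pb ≠ pt)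
    (hpb : .atom pb ∈ T) (hpt : .atom pt ∈ T)
    (hsub : SubClosed T) (hpure : ∀ A ∈ T, A.Pure) :
    ∀ A ∈ cl T,
      DerD (Theta T pb pt) (some (.leaf (.atom pb))) A ∧
      DerD (Theta T pb pt) (some (.comma (.leaf A) (.leaf (.atom pb)))) (.atom pb) ∧
      DerD (Theta T pb pt) (some (.comma (.leaf (.atom pb)) (.leaf A))) (.atom pb) ∧
      DerD (Theta T pb pt) (some (.leaf A)) (.atom pt) ∧
      DerD (Theta T pb pt) (some (.comma (.leaf A) (.leaf (.atom pt)))) (.atom pt) ∧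
      DerD (Theta T pb pt) (some (.comma (.leaf (.atom pt)) (.leaf A))) (.atom pt) :=
  stmt14_general T pb pt
end

section
/- Contextual bottom lemma: with Θ[T] as above, every c(T)-sequent of the form Γ[p_⊥] ⇒ A (p_⊥ occurring as a leaf of the formula-tree context Γ) is derivable from Θ[T] in DFNL*, and every c(T)-sequent Γ ⇒ p_⊤ is derivable from Θ[T] in DFNL*. -/
/-! Every `A ∈ c(T)` lies between `p_⊥` and `p_⊤`: `p_⊥ ⇒ A` by ∧R/∨R and `A ⇒ p_⊤` by ∧L/∨L
from the corresponding sequents of `Θ[T]` for the members of `T`. A whole tree then collapses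
to `p_⊤` by cutting each subtree into `p_⊤ ∘ p_⊤ ⇒ p_⊤`, and a tree with a leaf `p_⊥` collapses
to `p_⊥` by cutting the sibling subtrees along the path to that leaf down to `p_⊤` and using
`p_⊥ ∘ p_⊤ ⇒ p_⊥`, `p_⊤ ∘ p_⊥ ⇒ p_⊥`. One more cut against `p_⊥ ⇒ A` gives `Γ[p_⊥] ⇒ A`. -/

def Ctx.fill : Ctx → Tr → Tr
  | .hole, t => t
  | .left c d, t => .comma (c.fill t) d
  | .right g c, t => .comma g (c.fill t)

theorem Ctx.fillOpt_some (c : Ctx) (t : Tr) : c.fillOpt (some t) = some (c.fill t) := by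
  induction c <;> simp_all [Ctx.fillOpt, Ctx.fill]

theorem DerD.cut_comma {Φ : Set (Tr × Fm)} {a b : Tr} {A B C : Fm}
    (ha : DerD Φ (some a) A) (hb : DerD Φ (some b) B)
    (h : DerD Φ (some (.comma (.leaf A) (.leaf B))) C) :
    DerD Φ (some (.comma a b)) C :=
  have hAb : DerD Φ (some (.comma (.leaf A) b)) C :=
    .cut (.right (.leaf A) .hole) (some b) B C hb h
  .cut (.left .hole b) (some a) A C ha hAb

section Theta

variable {T : Set Fm} {pb pt : ℕ}

theorem theta_derD_bot_of_mem_cl {A : Fm} (hA : A ∈ cl T) :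
    DerD (Theta T pb pt) (some (.leaf (.atom pb))) A := by
  induction hA with
  | base hA => exact .hyp ⟨_, hA, Or.inl rfl⟩
  | conj _ _ ih₁ ih₂ => exact .conjR _ _ _ ih₁ ih₂
  | disj _ _ ih₁ _ => exact .disjR1 _ _ _ ih₁

theorem theta_derD_top_of_mem_cl {A : Fm} (hA : A ∈ cl T) :
    DerD (Theta T pb pt) (some (.leaf A)) (.atom pt) := by
  induction hA with
  | base hA => exact .hyp ⟨_, hA, by tauto⟩
  | conj _ _ ih₁ _ => exact .conjL1 .hole _ _ _ ih₁
  | disj _ _ ih₁ ih₂ => exact .disjL .hole _ _ _ ih₁ ih₂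

theorem theta_derD_top (hpt : .atom pt ∈ T) {Γ : Tr} (hΓ : Γ.leaves ⊆ cl T) :
    DerD (Theta T pb pt) (some Γ) (.atom pt) := by
  induction Γ with
  | leaf A => exact theta_derD_top_of_mem_cl (hΓ rfl)
  | comma a b iha ihb =>
    exact (iha fun _ hx => hΓ (.inl hx)).cut_comma (ihb fun _ hx => hΓ (.inr hx))
      (.hyp ⟨_, hpt, by tauto⟩)

theorem theta_derD_fill_bot (hpt : .atom pt ∈ T) {Γ : Ctx}
    (hΓ : (Γ.fill (.leaf (.atom pb))).leaves ⊆ cl T) :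
    DerD (Theta T pb pt) (some (Γ.fill (.leaf (.atom pb)))) (.atom pb) := by
  induction Γ with
  | hole => exact .id _
  | left c d ih =>
    exact (ih fun _ hx => hΓ (.inl hx)).cut_comma
      (theta_derD_top hpt fun _ hx => hΓ (.inr hx)) (.hyp ⟨_, hpt, by tauto⟩)
  | right g c ih =>
    exact (theta_derD_top hpt fun _ hx => hΓ (.inl hx)).cut_comma
      (ih fun _ hx => hΓ (.inr hx)) (.hyp ⟨_, hpt, by tauto⟩)

end Theta

theorem stmt15_general (T : Set Fm) (pb pt : ℕ)
    (hpt : .atom pt ∈ T) :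
    (∀ (Γ : Ctx) (A : Fm) (Δ : Tr),
        Γ.fillOpt (some (.leaf (.atom pb))) = some Δ →
        Δ.leaves ⊆ cl T → A ∈ cl T →
        DerD (Theta T pb pt) (some Δ) A) ∧
    (∀ Γ : Tr, Γ.leaves ⊆ cl T →
        DerD (Theta T pb pt) (some Γ) (.atom pt)) := by
  refine ⟨fun Γ A Δ hfill hΔ hA => ?_, fun _ => theta_derD_top hpt⟩
  obtain rfl : Γ.fill (.leaf (.atom pb)) = Δ := Option.some.inj (Γ.fillOpt_some _ ▸ hfill)
  exact .cut .hole _ (.atom pb) A (theta_derD_fill_bot hpt hΔ) (theta_derD_bot_of_mem_cl hA)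

/-- Contextual bottom lemma: every `c(T)`-sequent `Γ[p_⊥] ⇒ A` and every
`c(T)`-sequent `Γ ⇒ p_⊤` is derivable from `Θ[T]` in DFNL*. -/
theorem stmt15 (T : Set Fm) (pb pt : ℕ) (hne : pb ≠ pt)
    (hpb : .atom pb ∈ T) (hpt : .atom pt ∈ T)
    (hsub : SubClosed T) (hpure : ∀ A ∈ T, A.Pure) :
    (∀ (Γ : Ctx) (A : Fm) (Δ : Tr),
        Γ.fillOpt (some (.leaf (.atom pb))) = some Δ →
        Δ.leaves ⊆ cl T → A ∈ cl T →
        DerD (Theta T pb pt) (some Δ) A) ∧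
    (∀ Γ : Tr, Γ.leaves ⊆ cl T →
        DerD (Theta T pb pt) (some Γ) (.atom pt)) :=
  stmt15_general T pb pt hpt
end

section
/- Conservativity of modal extensions of BFNL*: for any sequent Γ ⇒ A in the language of BFNL* (i.e., containing no ◇ or □↓ and no modal structure operation ⟨-⟩), Γ ⇒ A is derivable in BFNL* if and only if it is derivable in BFNL*_i, for i ∈ {K, T, K4, S4, S5}. -/
/-- Formulas of the modal extensions of BFNL*: BFNL* connectives plus `◇` and `□↓`. -/
inductive Fm2 : Type
  | atom : ℕ → Fm2
  | bot  : Fm2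
  | top  : Fm2
  | conj : Fm2 → Fm2 → Fm2
  | disj : Fm2 → Fm2 → Fm2
  | prod : Fm2 → Fm2 → Fm2
  | ldiv : Fm2 → Fm2 → Fm2
  | rdiv : Fm2 → Fm2 → Fm2
  | neg  : Fm2 → Fm2
  | dia  : Fm2 → Fm2
  | boxd : Fm2 → Fm2   -- □↓, the residual of ◇
  deriving DecidableEq

/-- `□A := ¬◇¬A`. -/
def Fm2.box (A : Fm2) : Fm2 := .neg (.dia (.neg A))

/-- Formula trees with the binary structure operation `∘` and the unary `⟨-⟩`. -/
inductive Tr2 : Type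
  | leaf : Fm2 → Tr2
  | comma : Tr2 → Tr2 → Tr2
  | single : Tr2 → Tr2   -- ⟨Γ⟩
  deriving DecidableEq

/-- One-hole contexts in modal formula trees. -/
inductive Ctx2 : Type
  | hole : Ctx2
  | left : Ctx2 → Tr2 → Ctx2
  | right : Tr2 → Ctx2 → Ctx2
  | sing : Ctx2 → Ctx2

/-- Fill a context with a possibly empty tree (the hole is deleted if empty). -/
def Ctx2.fillOpt : Ctx2 → Option Tr2 → Option Tr2
  | .hole, t => t
  | .left c d, t => some (match c.fillOpt t with
      | none => d
      | some g => .comma g d)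
  | .right g c, t => some (match c.fillOpt t with
      | none => g
      | some d => .comma g d)
  | .sing c, t => (c.fillOpt t).map .single

/-- `A ∘ Γ` with possibly empty `Γ`. -/
def Tr2.pre (A : Fm2) : Option Tr2 → Tr2
  | none => .leaf A
  | some g => .comma (.leaf A) g

/-- `Γ ∘ B` with possibly empty `Γ`. -/
def Tr2.post : Option Tr2 → Fm2 → Tr2
  | none, B => .leaf B
  | some g, B => .comma g (.leaf B)

/-- The five modal extensions of BFNL*. -/
inductive Sys : Type
  | K | T | K4 | S4 | S5
  deriving DecidableEq

/-- Does the system contain axiom (T) `A ⇒ ◇A`? -/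
def Sys.hasT : Sys → Bool
  | .K => false | .T => true | .K4 => false | .S4 => true | .S5 => true

/-- Does the system contain axiom (4) `◇◇A ⇒ ◇A`? -/
def Sys.has4 : Sys → Bool
  | .K => false | .T => false | .K4 => true | .S4 => true | .S5 => true

/-- Does the system contain axiom (5) `◇A ⇒ □◇A`? -/
def Sys.has5 : Sys → Bool
  | .K => false | .T => false | .K4 => false | .S4 => false | .S5 => true

/-- Derivability in the modal extension `BFNL*_i` of BFNL*. The parameter `modal`
switches the modal rules and axioms on (`DerM .K true` is `BFNL*_K`, etc.);
with `modal = false` (any `i`) the calculus is plain BFNL* over the extended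
language. -/
inductive DerM (i : Sys) (modal : Bool) : Option Tr2 → Fm2 → Prop
  | id (A) : DerM i modal (some (.leaf A)) A
  | distr (A B C) :
      DerM i modal (some (.leaf (.conj A (.disj B C)))) (.disj (.conj A B) (.conj A C))
  | botL (Γ : Ctx2) (A) : DerM i modal (Γ.fillOpt (some (.leaf .bot))) A
  | topR (t) : DerM i modal t .top
  | neg1 (A) : DerM i modal (some (.leaf (.conj A (.neg A)))) .bot
  | neg2 (A) : DerM i modal (some (.leaf .top)) (.disj A (.neg A))
  | ldivL (Γ : Ctx2) (Δ : Tr2) (A B C) :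
      DerM i modal (some Δ) A → DerM i modal (Γ.fillOpt (some (.leaf B))) C →
      DerM i modal (Γ.fillOpt (some (.comma Δ (.leaf (.ldiv A B))))) C
  | ldivR (t A B) : DerM i modal (some (Tr2.pre A t)) B → DerM i modal t (.ldiv A B)
  | rdivL (Γ : Ctx2) (Δ : Tr2) (A B C) :
      DerM i modal (Γ.fillOpt (some (.leaf A))) C → DerM i modal (some Δ) B →
      DerM i modal (Γ.fillOpt (some (.comma (.leaf (.rdiv A B)) Δ))) C
  | rdivR (t A B) : DerM i modal (some (Tr2.post t B)) A → DerM i modal t (.rdiv A B)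
  | prodL (Γ : Ctx2) (A B C) :
      DerM i modal (Γ.fillOpt (some (.comma (.leaf A) (.leaf B)))) C →
      DerM i modal (Γ.fillOpt (some (.leaf (.prod A B)))) C
  | prodR (Γ Δ : Tr2) (A B) :
      DerM i modal (some Γ) A → DerM i modal (some Δ) B →
      DerM i modal (some (.comma Γ Δ)) (.prod A B)
  | conjL1 (Γ : Ctx2) (A1 A2 B) :
      DerM i modal (Γ.fillOpt (some (.leaf A1))) B →
      DerM i modal (Γ.fillOpt (some (.leaf (.conj A1 A2)))) B
  | conjL2 (Γ : Ctx2) (A1 A2 B) :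
      DerM i modal (Γ.fillOpt (some (.leaf A2))) B →
      DerM i modal (Γ.fillOpt (some (.leaf (.conj A1 A2)))) B
  | conjR (t A B) : DerM i modal t A → DerM i modal t B → DerM i modal t (.conj A B)
  | disjL (Γ : Ctx2) (A1 A2 B) :
      DerM i modal (Γ.fillOpt (some (.leaf A1))) B →
      DerM i modal (Γ.fillOpt (some (.leaf A2))) B →
      DerM i modal (Γ.fillOpt (some (.leaf (.disj A1 A2)))) B
  | disjR1 (t A1 A2) : DerM i modal t A1 → DerM i modal t (.disj A1 A2)
  | disjR2 (t A1 A2) : DerM i modal t A2 → DerM i modal t (.disj A1 A2)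
  | cut (Γ : Ctx2) (t A B) :
      DerM i modal t A → DerM i modal (Γ.fillOpt (some (.leaf A))) B →
      DerM i modal (Γ.fillOpt t) B
  -- modal rules:
  | diaL (Γ : Ctx2) (A B) : modal = true →
      DerM i modal (Γ.fillOpt (some (.single (.leaf A)))) B →
      DerM i modal (Γ.fillOpt (some (.leaf (.dia A)))) B
  | diaR (Γ : Tr2) (A) : modal = true →
      DerM i modal (some Γ) A → DerM i modal (some (.single Γ)) (.dia A)
  | boxdL (Γ : Ctx2) (A B) : modal = true →
      DerM i modal (Γ.fillOpt (some (.leaf A))) B →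
      DerM i modal (Γ.fillOpt (some (.single (.leaf (.boxd A))))) B
  | boxdR (Γ : Tr2) (A) : modal = true →
      DerM i modal (some (.single Γ)) A → DerM i modal (some Γ) (.boxd A)
  -- modal axioms, according to the system:
  | axT (A) : modal = true → i.hasT = true →
      DerM i modal (some (.leaf A)) (.dia A)
  | ax4 (A) : modal = true → i.has4 = true →
      DerM i modal (some (.leaf (.dia (.dia A)))) (.dia A)
  | ax5 (A) : modal = true → i.has5 = true →
      DerM i modal (some (.leaf (.dia A))) (Fm2.box (.dia A))

/-- A formula of the language of BFNL*: no `◇`, no `□↓`. -/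
def Fm2.ModalFree : Fm2 → Prop
  | .atom _ => True
  | .bot => True
  | .top => True
  | .conj A B => A.ModalFree ∧ B.ModalFree
  | .disj A B => A.ModalFree ∧ B.ModalFree
  | .prod A B => A.ModalFree ∧ B.ModalFree
  | .ldiv A B => A.ModalFree ∧ B.ModalFree
  | .rdiv A B => A.ModalFree ∧ B.ModalFree
  | .neg A => A.ModalFree
  | .dia _ => False
  | .boxd _ => False

/-- A formula tree of the language of BFNL*: no `⟨-⟩` and all leaves modal-free. -/
def Tr2.ModalFree : Tr2 → Prop
  | .leaf A => A.ModalFree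
  | .comma Γ Δ => Γ.ModalFree ∧ Δ.ModalFree
  | .single _ => False

/-!
Forget the modalities: erasing `◇`, `□↓` and the structure operation `⟨-⟩` maps every
`BFNL*_i`-derivation to a BFNL*-derivation of the erased sequent. The modal rules become
trivial, axioms (T) and (4) become identities, and (5) becomes `A ⇒ ¬¬A`, which BFNL*
derives from distributivity and the two negation axioms. A sequent in the language of
BFNL* is its own erasure.
-/

def Fm2.erase : Fm2 → Fm2
  | .atom n => .atom n
  | .bot => .bot
  | .top => .top
  | .conj A B => .conj A.erase B.erase
  | .disj A B => .disj A.erase B.erase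
  | .prod A B => .prod A.erase B.erase
  | .ldiv A B => .ldiv A.erase B.erase
  | .rdiv A B => .rdiv A.erase B.erase
  | .neg A => .neg A.erase
  | .dia A => A.erase
  | .boxd A => A.erase

def Tr2.erase : Tr2 → Tr2
  | .leaf A => .leaf A.erase
  | .comma Γ Δ => .comma Γ.erase Δ.erase
  | .single Γ => Γ.erase

def Ctx2.erase : Ctx2 → Ctx2
  | .hole => .hole
  | .left c Δ => .left c.erase Δ.erase
  | .right Γ c => .right Γ.erase c.erase
  | .sing c => c.erase

theorem Fm2.erase_of_modalFree {A : Fm2} (h : A.ModalFree) : A.erase = A := by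
  induction A <;> simp_all [Fm2.erase, Fm2.ModalFree]

theorem Tr2.erase_of_modalFree {Γ : Tr2} (h : Γ.ModalFree) : Γ.erase = Γ := by
  induction Γ <;> simp_all [Tr2.erase, Tr2.ModalFree, Fm2.erase_of_modalFree]

theorem Ctx2.map_erase_fillOpt (c : Ctx2) (t : Option Tr2) :
    (c.fillOpt t).map Tr2.erase = c.erase.fillOpt (t.map Tr2.erase) := by
  induction c generalizing t with
  | hole => rfl
  | left c Δ ih | right Γ c ih | sing c ih =>
    simp only [Ctx2.fillOpt, Ctx2.erase, Option.map_some, ← ih]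
    cases c.fillOpt t <;> simp [Tr2.erase]

theorem Tr2.erase_pre (A : Fm2) (t : Option Tr2) :
    (Tr2.pre A t).erase = Tr2.pre A.erase (t.map Tr2.erase) := by
  cases t <;> rfl

theorem Tr2.erase_post (t : Option Tr2) (B : Fm2) :
    (Tr2.post t B).erase = Tr2.post (t.map Tr2.erase) B.erase := by
  cases t <;> rfl

namespace DerM

variable {i : Sys} {m : Bool}

theorem trans {t : Option Tr2} {A B : Fm2} (h₁ : DerM i m t A)
    (h₂ : DerM i m (some (.leaf A)) B) : DerM i m t B :=
  .cut .hole t A B h₁ h₂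

theorem neg_neg_intro (A : Fm2) : DerM i m (some (.leaf A)) (.neg (.neg A)) := by
  have excluded_middle : DerM i m (some (.leaf A)) (.disj (.neg A) (.neg (.neg A))) :=
    (topR _).trans (neg2 _)
  have contradiction : DerM i m (some (.leaf (.conj A (.neg A)))) (.neg (.neg A)) :=
    (neg1 A).trans (botL .hole _)
  have by_cases : DerM i m
      (some (.leaf (.disj (.conj A (.neg A)) (.conj A (.neg (.neg A)))))) (.neg (.neg A)) :=
    disjL .hole _ _ _ contradiction (conjL2 .hole A _ _ (id _))
  exact (conjR _ _ _ (id A) excluded_middle).trans ((distr _ _ _).trans by_cases)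

theorem modal_of_nonmodal {t : Option Tr2} {A : Fm2} (h : DerM i false t A) :
    DerM i true t A := by
  induction h with
  | diaL _ _ _ hm | diaR _ _ hm | boxdL _ _ _ hm | boxdR _ _ hm
  | axT _ hm | ax4 _ hm | ax5 _ hm => cases hm
  | id A => exact id A
  | distr A B C => exact distr A B C
  | botL Γ A => exact botL Γ A
  | topR t => exact topR t
  | neg1 A => exact neg1 A
  | neg2 A => exact neg2 A
  | ldivL Γ Δ A B C _ _ ih₁ ih₂ => exact ldivL Γ Δ A B C ih₁ ih₂
  | ldivR t A B _ ih => exact ldivR t A B ih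
  | rdivL Γ Δ A B C _ _ ih₁ ih₂ => exact rdivL Γ Δ A B C ih₁ ih₂
  | rdivR t A B _ ih => exact rdivR t A B ih
  | prodL Γ A B C _ ih => exact prodL Γ A B C ih
  | prodR Γ Δ A B _ _ ih₁ ih₂ => exact prodR Γ Δ A B ih₁ ih₂
  | conjL1 Γ A₁ A₂ B _ ih => exact conjL1 Γ A₁ A₂ B ih
  | conjL2 Γ A₁ A₂ B _ ih => exact conjL2 Γ A₁ A₂ B ih
  | conjR t A B _ _ ih₁ ih₂ => exact conjR t A B ih₁ ih₂
  | disjL Γ A₁ A₂ B _ _ ih₁ ih₂ => exact disjL Γ A₁ A₂ B ih₁ ih₂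
  | disjR1 t A₁ A₂ _ ih => exact disjR1 t A₁ A₂ ih
  | disjR2 t A₁ A₂ _ ih => exact disjR2 t A₁ A₂ ih
  | cut Γ t A B _ _ ih₁ ih₂ => exact cut Γ t A B ih₁ ih₂

theorem erase {t : Option Tr2} {A : Fm2} (h : DerM i m t A) :
    DerM i false (t.map Tr2.erase) A.erase := by
  induction h with
  | id A => exact id _
  | distr A B C => exact distr _ _ _
  | botL Γ A => rw [Ctx2.map_erase_fillOpt]; exact botL _ _
  | topR t => exact topR _
  | neg1 A => exact neg1 _
  | neg2 A => exact neg2 _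
  | ldivL Γ Δ A B C _ _ ih₁ ih₂ =>
    rw [Ctx2.map_erase_fillOpt] at ih₂ ⊢
    exact ldivL _ _ _ _ _ ih₁ ih₂
  | ldivR t A B _ ih =>
    rw [Option.map_some, Tr2.erase_pre] at ih
    exact ldivR _ _ _ ih
  | rdivL Γ Δ A B C _ _ ih₁ ih₂ =>
    rw [Ctx2.map_erase_fillOpt] at ih₁ ⊢
    exact rdivL _ _ _ _ _ ih₁ ih₂
  | rdivR t A B _ ih =>
    rw [Option.map_some, Tr2.erase_post] at ih
    exact rdivR _ _ _ ih
  | prodL Γ A B C _ ih =>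
    rw [Ctx2.map_erase_fillOpt] at ih ⊢
    exact prodL _ _ _ _ ih
  | prodR Γ Δ A B _ _ ih₁ ih₂ => exact prodR _ _ _ _ ih₁ ih₂
  | conjL1 Γ A₁ A₂ B _ ih =>
    rw [Ctx2.map_erase_fillOpt] at ih ⊢
    exact conjL1 _ _ _ _ ih
  | conjL2 Γ A₁ A₂ B _ ih =>
    rw [Ctx2.map_erase_fillOpt] at ih ⊢
    exact conjL2 _ _ _ _ ih
  | conjR t A B _ _ ih₁ ih₂ => exact conjR _ _ _ ih₁ ih₂
  | disjL Γ A₁ A₂ B _ _ ih₁ ih₂ =>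
    rw [Ctx2.map_erase_fillOpt] at ih₁ ih₂ ⊢
    exact disjL _ _ _ _ ih₁ ih₂
  | disjR1 t A₁ A₂ _ ih => exact disjR1 _ _ _ ih
  | disjR2 t A₁ A₂ _ ih => exact disjR2 _ _ _ ih
  | cut Γ t A B _ _ ih₁ ih₂ =>
    rw [Ctx2.map_erase_fillOpt] at ih₂ ⊢
    exact cut _ _ _ _ ih₁ ih₂
  | diaL Γ A B _ _ ih | boxdL Γ A B _ _ ih =>
    rwa [Ctx2.map_erase_fillOpt] at ih ⊢
  | diaR Γ A _ _ ih | boxdR Γ A _ _ ih => exact ih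
  | axT A _ _ | ax4 A _ _ => exact id _
  | ax5 A _ _ => exact neg_neg_intro _

end DerM

/-- Conservativity of the modal extensions of BFNL*: a sequent `Γ ⇒ A` in the
language of BFNL* is derivable in BFNL* iff it is derivable in `BFNL*_i`,
for each `i ∈ {K, T, K4, S4, S5}`. -/
theorem stmt19 (i : Sys) (t : Option Tr2) (A : Fm2)
    (ht : ∀ Γ, t = some Γ → Γ.ModalFree) (hA : A.ModalFree) :
    DerM i false t A ↔ DerM i true t A := by
  refine ⟨DerM.modal_of_nonmodal, fun h => ?_⟩
  have ht_erase : t.map Tr2.erase = t := by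
    cases t with
    | none => rfl
    | some Γ => rw [Option.map_some, Tr2.erase_of_modalFree (ht Γ rfl)]
  simpa only [ht_erase, Fm2.erase_of_modalFree hA] using h.erase
end
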